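/- For the Frank–Wolfe algorithm run for T iterations, the best iterate satisfies max_{0 ≤ j ≤ T} F(x(t_j)) ≥ (1/4) F(x*) − (nL/8) · H_{2,T}/H_T², where H_T = ∑_{k=1}^T 1/k and H_{2,T} = ∑_{k=1}^T 1/k². -/

import Mathlib

/-- The harmonic number `H j = ∑_{k=1}^j 1/k` (with `H 0 = 0`). -/
noncomputable def harmonicNum (j : ℕ) : ℝ := ∑ k ∈ Finset.range j, (1 : ℝ) / (k + 1)

/-- `H_{2,j} = ∑_{k=1}^j 1/k²`. -/
noncomputable def harmonicNum2 (j : ℕ) : ℝ := ∑ k ∈ Finset.range j, (1 : ℝ) / ((k : ℝ) + 1) ^ 2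

/-- The time values `t_j = 1/(1 - ln(1 + H_j/H_T)) - 1` of the Frank–Wolfe algorithm. -/
noncomputable def fwTime (T j : ℕ) : ℝ :=
  1 / (1 - Real.log (1 + harmonicNum j / harmonicNum T)) - 1

/-- The Frank–Wolfe step ratio `e^{-1/(1+t_j) + 1/(1+t_{j+1})}`. -/
noncomputable def fwRatio (T j : ℕ) : ℝ :=
  Real.exp (-(1 / (1 + fwTime T j)) + 1 / (1 + fwTime T (j + 1)))

/-- `√a_{t_j} = e^{t_j/(1+t_j)}`. -/
noncomputable def fwSqa (T j : ℕ) : ℝ := Real.exp (fwTime T j / (1 + fwTime T j))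

/-- `F : [0,1]^n → ℝ` is DR-submodular: for all `x ≤ y` in `[0,1]^n`, coordinates `i` and
`a > 0` with `x + a·e_i, y + a·e_i ∈ [0,1]^n`, one has
`F(x + a·e_i) - F(x) ≥ F(y + a·e_i) - F(y)`. -/
def DRSubmodular {n : ℕ} (F : (Fin n → ℝ) → ℝ) : Prop :=
  ∀ x y : Fin n → ℝ, x ∈ Set.Icc (0 : Fin n → ℝ) 1 → y ∈ Set.Icc (0 : Fin n → ℝ) 1 →
    x ≤ y → ∀ i : Fin n, ∀ a : ℝ, 0 < a →
      x + a • (Pi.single i 1 : Fin n → ℝ) ∈ Set.Icc (0 : Fin n → ℝ) 1 →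
      y + a • (Pi.single i 1 : Fin n → ℝ) ∈ Set.Icc (0 : Fin n → ℝ) 1 →
      F (y + a • (Pi.single i 1 : Fin n → ℝ)) - F y ≤
        F (x + a • (Pi.single i 1 : Fin n → ℝ)) - F x

/-- The continuous linear map `y ↦ ⟨g, y⟩ = ∑ i, g i * y i` on `ℝⁿ`. -/
noncomputable def gradCLM {n : ℕ} (g : Fin n → ℝ) : (Fin n → ℝ) →L[ℝ] ℝ :=
  ∑ i, g i • (ContinuousLinearMap.proj i : (Fin n → ℝ) →L[ℝ] ℝ)

/-- `gradF` is the gradient of `F` on the box `[0,1]^n`: at each point of the box, `F` is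
differentiable within the box with derivative `y ↦ ⟨gradF z, y⟩`. -/
def HasGradientOnBox {n : ℕ} (F : (Fin n → ℝ) → ℝ) (gradF : (Fin n → ℝ) → Fin n → ℝ) : Prop :=
  ∀ z ∈ Set.Icc (0 : Fin n → ℝ) 1, HasFDerivWithinAt F (gradCLM (gradF z)) (Set.Icc 0 1) z

/-!
DR-submodularity makes the gradient antitone on the box, so `F` is concave along nonnegative
directions. Comparing `x` with `x ⊔ x*` and `x ⊓ x*` then gives
`⟨∇F(x), x* - x⟩ ≥ (1 - ‖x‖∞) F(x*) - 2 F(x)`.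
The step sizes keep `‖x_j‖∞ ≤ 1 - 1/s_j`, where `s_j = √a_{t_j} = 1 + H_j / H_T` runs from
`1` to `2`, and the Frank–Wolfe step ratio is `s_j / s_{j+1}`. Unless some iterate already
reaches `F(x*)/4`, all satisfy `F(x_j) ≤ F(x*)/2`; then, by `L`-smoothness, the potential
`s_j² F(x_j) - (s_j - 1) F(x*)` drops by at most `(nL/2) (s_{j+1} - s_j)² = (nL/2) / ((j+1) H_T)²`
per step, and at `j = T` this reads
`4 F(x_T) ≥ F(x*) - (nL/2) H_{2,T} / H_T²`.
-/

open Set Filter Topology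

lemma gradCLM_apply {n : ℕ} (g y : Fin n → ℝ) : gradCLM g y = ∑ i, g i * y i := by
  simp [gradCLM]

section Box

variable {n : ℕ}

lemma mem_box_iff {z : Fin n → ℝ} : z ∈ Icc (0 : Fin n → ℝ) 1 ↔ ∀ i, z i ∈ Icc (0 : ℝ) 1 := by
  rw [← pi_univ_Icc, mem_univ_pi]
  rfl

lemma add_smul_single_mem_box {z : Fin n → ℝ} (hz : z ∈ Icc (0 : Fin n → ℝ) 1) (i : Fin n)
    {a : ℝ} (ha : z i + a ∈ Icc (0 : ℝ) 1) :
    z + a • (Pi.single i 1 : Fin n → ℝ) ∈ Icc (0 : Fin n → ℝ) 1 := by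
  rw [mem_box_iff] at hz ⊢
  intro j
  rcases eq_or_ne j i with rfl | hj
  · simpa using ha
  · simpa [Pi.single_apply, hj] using hz j

lemma segment_mem_box {z w : Fin n → ℝ} (hz : z ∈ Icc (0 : Fin n → ℝ) 1)
    (hw : w ∈ Icc (0 : Fin n → ℝ) 1) {c : ℝ} (hc : c ∈ Icc (0 : ℝ) 1) :
    z + c • (w - z) ∈ Icc (0 : Fin n → ℝ) 1 := by
  convert (convex_Icc (0 : Fin n → ℝ) 1) hz hw (sub_nonneg.2 hc.2) hc.1 (by ring) using 1
  module

lemma le_add_smul_sub {z w : Fin n → ℝ} (hzw : z ≤ w) {c : ℝ} (hc : 0 ≤ c) :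
    z ≤ z + c • (w - z) := fun i => by
  simpa using mul_nonneg hc (sub_nonneg.2 (hzw i))

lemma add_smul_sub_le {z w : Fin n → ℝ} (hzw : z ≤ w) {c : ℝ} (hc : c ≤ 1) :
    z + c • (w - z) ≤ w := fun i => by
  have := mul_le_mul_of_nonneg_right hc (sub_nonneg.2 (hzw i))
  simp only [Pi.add_apply, Pi.smul_apply, Pi.sub_apply, smul_eq_mul]
  linarith

end Box

section DRSubmodular

variable {n : ℕ} {F : (Fin n → ℝ) → ℝ} {gradF : (Fin n → ℝ) → Fin n → ℝ}

lemma HasGradientOnBox.hasDerivWithinAt_comp {I : Set ℝ} {p : ℝ → Fin n → ℝ} {p' : Fin n → ℝ}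
    {a : ℝ} (hgrad : HasGradientOnBox F gradF) (hp : HasDerivWithinAt p p' I a)
    (hpI : MapsTo p I (Icc 0 1)) (ha : a ∈ I) :
    HasDerivWithinAt (F ∘ p) (∑ i, gradF (p a) i * p' i) I a := by
  rw [← gradCLM_apply]
  exact (hgrad (p a) (hpI ha)).comp_hasDerivWithinAt a hp hpI

lemma DRSubmodular.monotoneOn_sub_shift (hDR : DRSubmodular F) {z w : Fin n → ℝ}
    (hz : z ∈ Icc (0 : Fin n → ℝ) 1) (hw : w ∈ Icc (0 : Fin n → ℝ) 1) (hzw : z ≤ w) (i : Fin n) :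
    MonotoneOn (fun a : ℝ => F (z + a • (Pi.single i 1 : Fin n → ℝ)) -
      F (w + a • (Pi.single i 1 : Fin n → ℝ))) (Icc (-z i) (1 - w i)) := by
  set e : Fin n → ℝ := Pi.single i 1
  have hmem : ∀ y ∈ Icc (0 : Fin n → ℝ) 1, y i ∈ Icc (z i) (w i) → ∀ a ∈ Icc (-z i) (1 - w i),
      y + a • e ∈ Icc (0 : Fin n → ℝ) 1 := fun y hy hyi a ha =>
    add_smul_single_mem_box hy i ⟨by linarith [ha.1, hyi.1], by linarith [ha.2, hyi.2]⟩
  have hz' := hmem z hz ⟨le_rfl, hzw i⟩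
  have hw' := hmem w hw ⟨hzw i, le_rfl⟩
  intro a ha b hb hab
  rcases hab.eq_or_lt with rfl | hab
  · rfl
  have hstep : ∀ y : Fin n → ℝ, y + a • e + (b - a) • e = y + b • e := fun y => by module
  have := hDR (z + a • e) (w + a • e) (hz' a ha) (hw' a ha) (add_le_add_left hzw _) i (b - a)
    (sub_pos.2 hab) (by rw [hstep]; exact hz' b hb) (by rw [hstep]; exact hw' b hb)
  rw [hstep, hstep] at this
  linarith

lemma DRSubmodular.gradF_le_of_sub_lt_one (hDR : DRSubmodular F)
    (hgrad : HasGradientOnBox F gradF) {z w : Fin n → ℝ} (hz : z ∈ Icc (0 : Fin n → ℝ) 1)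
    (hw : w ∈ Icc (0 : Fin n → ℝ) 1) (hzw : z ≤ w) {i : Fin n} (hi : w i - z i < 1) :
    gradF w i ≤ gradF z i := by
  set I := Icc (-z i) (1 - w i)
  have hzi := mem_box_iff.1 hz i
  have hwi := mem_box_iff.1 hw i
  have h0 : (0 : ℝ) ∈ I := ⟨by linarith [hzi.1], by linarith [hwi.2]⟩
  have hshift : ∀ y ∈ Icc (0 : Fin n → ℝ) 1, y i ∈ Icc (z i) (w i) →
      HasDerivWithinAt (fun a : ℝ => F (y + a • (Pi.single i 1 : Fin n → ℝ))) (gradF y i) I 0 := by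
    intro y hy hyi
    have hp : HasDerivWithinAt (fun a : ℝ => y + a • (Pi.single i 1 : Fin n → ℝ))
        (Pi.single i 1) I 0 := by
      simpa using ((hasDerivAt_id (0 : ℝ)).smul_const (Pi.single i 1 : Fin n → ℝ)
        |>.const_add y).hasDerivWithinAt
    have hmaps : MapsTo (fun a : ℝ => y + a • (Pi.single i 1 : Fin n → ℝ)) I (Icc 0 1) :=
      fun a ha =>
        add_smul_single_mem_box hy i ⟨by linarith [ha.1, hyi.1], by linarith [ha.2, hyi.2]⟩
    simpa [Pi.single_apply, Function.comp_def] using hgrad.hasDerivWithinAt_comp hp hmaps h0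
  have hacc : AccPt (0 : ℝ) (𝓟 I) := (uniqueDiffOn_Icc (by linarith) 0 h0).accPt
  have := ((hshift z hz ⟨le_rfl, hzw i⟩).sub (hshift w hw ⟨hzw i, le_rfl⟩)).nonneg_of_monotoneOn
    hacc (hDR.monotoneOn_sub_shift hz hw hzw i)
  linarith

lemma DRSubmodular.gradF_antitone (hDR : DRSubmodular F) (hgrad : HasGradientOnBox F gradF)
    {z w : Fin n → ℝ} (hz : z ∈ Icc (0 : Fin n → ℝ) 1) (hw : w ∈ Icc (0 : Fin n → ℝ) 1)
    (hzw : z ≤ w) : gradF w ≤ gradF z := by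
  intro i
  by_cases hi : w i - z i < 1
  · exact hDR.gradF_le_of_sub_lt_one hgrad hz hw hzw hi
  -- here `z i = 0` and `w i = 1`: pass through the point with `i`-th coordinate `1/2`
  have hzi : z i = 0 := by linarith [(mem_box_iff.1 hz i).1, (mem_box_iff.1 hw i).2]
  have hwi : w i = 1 := by linarith [(mem_box_iff.1 hz i).1, (mem_box_iff.1 hw i).2]
  set u := w + (-(1 / 2) : ℝ) • (Pi.single i 1 : Fin n → ℝ)
  have hui : u i = w i - 1 / 2 := by simp [u]; ring
  have hu : u ∈ Icc (0 : Fin n → ℝ) 1 :=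
    add_smul_single_mem_box hw i ⟨by linarith, by linarith⟩
  have hzu : z ≤ u := fun j => by
    rcases eq_or_ne j i with rfl | hj
    · linarith
    · simpa [u, Pi.single_apply, hj] using hzw j
  have huw : u ≤ w := fun j => by
    rcases eq_or_ne j i with rfl | hj
    · linarith
    · simp [u, hj]
  calc gradF w i ≤ gradF u i :=
        hDR.gradF_le_of_sub_lt_one hgrad hu hw huw (by linarith)
    _ ≤ gradF z i := hDR.gradF_le_of_sub_lt_one hgrad hz hu hzu (by linarith)

lemma HasGradientOnBox.exists_sub_eq_sum (hgrad : HasGradientOnBox F gradF) {z w : Fin n → ℝ}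
    (hz : z ∈ Icc (0 : Fin n → ℝ) 1) (hw : w ∈ Icc (0 : Fin n → ℝ) 1) :
    ∃ c ∈ Ioo (0 : ℝ) 1, F w - F z = ∑ i, gradF (z + c • (w - z)) i * (w i - z i) := by
  have hφ : ∀ c ∈ Icc (0 : ℝ) 1, HasDerivWithinAt (fun c : ℝ => F (z + c • (w - z)))
      (∑ i, gradF (z + c • (w - z)) i * (w i - z i)) (Icc 0 1) c := by
    intro c hc
    have hp : HasDerivWithinAt (fun c : ℝ => z + c • (w - z)) (w - z) (Icc 0 1) c := by
      simpa using ((hasDerivAt_id c).smul_const (w - z) |>.const_add z).hasDerivWithinAt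
    simpa [Function.comp_def] using
      hgrad.hasDerivWithinAt_comp hp (fun c hc => segment_mem_box hz hw hc) hc
  obtain ⟨c, hc, hslope⟩ := exists_hasDerivAt_eq_slope (fun c : ℝ => F (z + c • (w - z))) _
    zero_lt_one (fun c hc => (hφ c hc).continuousWithinAt)
    (fun c hc => (hφ c (Ioo_subset_Icc_self hc)).hasDerivAt (Icc_mem_nhds hc.1 hc.2))
  exact ⟨c, hc, by simpa using hslope.symm⟩

lemma DRSubmodular.sub_le_sum_gradF_mul (hDR : DRSubmodular F) (hgrad : HasGradientOnBox F gradF)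
    {z w : Fin n → ℝ} (hz : z ∈ Icc (0 : Fin n → ℝ) 1) (hw : w ∈ Icc (0 : Fin n → ℝ) 1)
    (hzw : z ≤ w) : F w - F z ≤ ∑ i, gradF z i * (w i - z i) := by
  obtain ⟨c, hc, h⟩ := hgrad.exists_sub_eq_sum hz hw
  rw [h]
  refine Finset.sum_le_sum fun i _ => mul_le_mul_of_nonneg_right ?_ (sub_nonneg.2 (hzw i))
  exact hDR.gradF_antitone hgrad hz (segment_mem_box hz hw (Ioo_subset_Icc_self hc))
    (le_add_smul_sub hzw hc.1.le) i

lemma DRSubmodular.sum_gradF_mul_le_sub (hDR : DRSubmodular F) (hgrad : HasGradientOnBox F gradF)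
    {z w : Fin n → ℝ} (hz : z ∈ Icc (0 : Fin n → ℝ) 1) (hw : w ∈ Icc (0 : Fin n → ℝ) 1)
    (hzw : z ≤ w) : ∑ i, gradF w i * (w i - z i) ≤ F w - F z := by
  obtain ⟨c, hc, h⟩ := hgrad.exists_sub_eq_sum hz hw
  rw [h]
  refine Finset.sum_le_sum fun i _ => mul_le_mul_of_nonneg_right ?_ (sub_nonneg.2 (hzw i))
  exact hDR.gradF_antitone hgrad (segment_mem_box hz hw (Ioo_subset_Icc_self hc)) hw
    (add_smul_sub_le hzw hc.2.le) i

lemma DRSubmodular.one_sub_mul_add_mul_le (hDR : DRSubmodular F)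
    (hgrad : HasGradientOnBox F gradF) {z w : Fin n → ℝ} (hz : z ∈ Icc (0 : Fin n → ℝ) 1)
    (hw : w ∈ Icc (0 : Fin n → ℝ) 1) (hzw : z ≤ w) {t : ℝ} (ht0 : 0 ≤ t) (ht1 : t ≤ 1) :
    (1 - t) * F z + t * F w ≤ F (z + t • (w - z)) := by
  set u := z + t • (w - z)
  have hu : u ∈ Icc (0 : Fin n → ℝ) 1 := segment_mem_box hz hw ⟨ht0, ht1⟩
  set G := ∑ i, gradF u i * (w i - z i)
  have hup : F w - F u ≤ (1 - t) * G := by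
    convert hDR.sub_le_sum_gradF_mul hgrad hu hw (add_smul_sub_le hzw ht1) using 1
    rw [Finset.mul_sum]
    refine Finset.sum_congr rfl fun i _ => ?_
    simp only [u, Pi.add_apply, Pi.smul_apply, Pi.sub_apply, smul_eq_mul]
    ring
  have hlow : t * G ≤ F u - F z := by
    convert hDR.sum_gradF_mul_le_sub hgrad hz hu (le_add_smul_sub hzw ht0) using 1
    rw [Finset.mul_sum]
    refine Finset.sum_congr rfl fun i _ => ?_
    simp only [u, Pi.add_apply, Pi.smul_apply, Pi.sub_apply, smul_eq_mul]
    ring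
  linarith [mul_le_mul_of_nonneg_left hup ht0, mul_le_mul_of_nonneg_left hlow (sub_nonneg.2 ht1)]

lemma DRSubmodular.mul_le_of_sub_le (hFnonneg : ∀ z ∈ Icc (0 : Fin n → ℝ) 1, 0 ≤ F z)
    (hDR : DRSubmodular F) (hgrad : HasGradientOnBox F gradF) {z u : Fin n → ℝ}
    (hz : z ∈ Icc (0 : Fin n → ℝ) 1) (hzu : z ≤ u) {θ : ℝ} (hθ0 : 0 ≤ θ) (hθ1 : θ ≤ 1)
    (hu : ∀ i, u i - z i ≤ (1 - θ) * (1 - z i)) : θ * F z ≤ F u := by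
  rcases hθ1.eq_or_lt with rfl | hθ1
  · have : u = z := le_antisymm (fun i => by linarith [hu i]) hzu
    simp [this]
  -- `u` lies on the segment from `z` to the point `r` of the box, at parameter `1 - θ`
  have ht : 0 < 1 - θ := sub_pos.2 hθ1
  set r := z + (1 - θ)⁻¹ • (u - z)
  have hri : ∀ i, r i = z i + (u i - z i) / (1 - θ) := fun i => by
    simp [r, div_eq_inv_mul]
  have hzr : z ≤ r := fun i => by
    rw [hri]
    linarith [div_nonneg (sub_nonneg.2 (hzu i)) ht.le]
  have hr : r ∈ Icc (0 : Fin n → ℝ) 1 := by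
    refine mem_box_iff.2 fun i => ⟨(mem_box_iff.1 hz i).1.trans (hzr i), ?_⟩
    rw [hri]
    linarith [(div_le_iff₀' ht).2 (hu i)]
  have hur : z + (1 - θ) • (r - z) = u := by
    simp only [r, add_sub_cancel_left, smul_inv_smul₀ ht.ne']
    abel
  have := hDR.one_sub_mul_add_mul_le hgrad hz hr hzr ht.le (by linarith)
  rw [hur, sub_sub_cancel] at this
  linarith [mul_nonneg ht.le (hFnonneg r hr)]

lemma DRSubmodular.mul_sub_two_mul_le_sum_gradF
    (hFnonneg : ∀ z ∈ Icc (0 : Fin n → ℝ) 1, 0 ≤ F z) (hDR : DRSubmodular F)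
    (hgrad : HasGradientOnBox F gradF) {x y : Fin n → ℝ} (hx : x ∈ Icc (0 : Fin n → ℝ) 1)
    (hy : y ∈ Icc (0 : Fin n → ℝ) 1) {θ : ℝ} (hθ0 : 0 ≤ θ) (hθ1 : θ ≤ 1)
    (hxθ : ∀ i, x i ≤ 1 - θ) :
    θ * F y - 2 * F x ≤ ∑ i, gradF x i * (y i - x i) := by
  have hq : x ⊔ y ∈ Icc (0 : Fin n → ℝ) 1 := ⟨hx.1.trans le_sup_left, sup_le hx.2 hy.2⟩
  have hp : x ⊓ y ∈ Icc (0 : Fin n → ℝ) 1 := ⟨le_inf hx.1 hy.1, inf_le_left.trans hx.2⟩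
  have hup := hDR.sub_le_sum_gradF_mul hgrad hx hq le_sup_left
  have hlow := hDR.sum_gradF_mul_le_sub hgrad hp hx inf_le_left
  have hsplit : ∑ i, gradF x i * (y i - x i) =
      ∑ i, gradF x i * ((x ⊔ y) i - x i) - ∑ i, gradF x i * (x i - (x ⊓ y) i) := by
    rw [← Finset.sum_sub_distrib]
    refine Finset.sum_congr rfl fun i _ => ?_
    simp only [Pi.sup_apply, Pi.inf_apply]
    linear_combination (-gradF x i) * max_add_min (x i) (y i)
  have hFq : θ * F y ≤ F (x ⊔ y) := by
    refine hDR.mul_le_of_sub_le hFnonneg hgrad hy le_sup_right hθ0 hθ1 fun i => ?_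
    have hyi := mem_box_iff.1 hy i
    rcases le_total (x i) (y i) with h | h
    · simp only [Pi.sup_apply, sup_eq_right.2 h, sub_self]
      nlinarith [hyi.2]
    · simp only [Pi.sup_apply, sup_eq_left.2 h]
      nlinarith [hxθ i, hyi.1]
  linarith [hFnonneg _ hp]

end DRSubmodular

section FrankWolfeStep

variable {n : ℕ} {F : (Fin n → ℝ) → ℝ} {gradF : (Fin n → ℝ) → Fin n → ℝ}

lemma sum_sq_sub_le_card {x v : Fin n → ℝ} (hx : x ∈ Icc (0 : Fin n → ℝ) 1)
    (hv : v ∈ Icc (0 : Fin n → ℝ) 1) : ∑ i, (v i - x i) ^ 2 ≤ n := by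
  calc ∑ i, (v i - x i) ^ 2 ≤ ∑ _i : Fin n, (1 : ℝ) := Finset.sum_le_sum fun i _ => by
        have hxi := mem_box_iff.1 hx i
        have hvi := mem_box_iff.1 hv i
        nlinarith [hxi.1, hxi.2, hvi.1, hvi.2]
    _ = n := by simp

lemma DRSubmodular.le_apply_fw_step (hFnonneg : ∀ z ∈ Icc (0 : Fin n → ℝ) 1, 0 ≤ F z)
    (hDR : DRSubmodular F) (hgrad : HasGradientOnBox F gradF) {L : ℝ} (hL : 0 ≤ L)
    (hsmooth : ∀ z ∈ Icc (0 : Fin n → ℝ) 1, ∀ w ∈ Icc (0 : Fin n → ℝ) 1,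
      |F w - F z - ∑ i, gradF z i * (w i - z i)| ≤ L / 2 * ∑ i, (w i - z i) ^ 2)
    {x v y : Fin n → ℝ} (hx : x ∈ Icc (0 : Fin n → ℝ) 1) (hv : v ∈ Icc (0 : Fin n → ℝ) 1)
    (hy : y ∈ Icc (0 : Fin n → ℝ) 1) {θ ρ : ℝ} (hθ0 : 0 ≤ θ) (hθ1 : θ ≤ 1)
    (hxθ : ∀ i, x i ≤ 1 - θ) (hρ0 : 0 ≤ ρ) (hρ1 : ρ ≤ 1)
    (hvmax : ∑ i, gradF x i * y i ≤ ∑ i, gradF x i * v i) :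
    F x + (1 - ρ) * (θ * F y - 2 * F x) - n * L / 2 * (1 - ρ) ^ 2 ≤
      F (ρ • x + (1 - ρ) • v) := by
  set x' := ρ • x + (1 - ρ) • v
  have hx' : x' ∈ Icc (0 : Fin n → ℝ) 1 :=
    convex_Icc (0 : Fin n → ℝ) 1 hx hv hρ0 (sub_nonneg.2 hρ1) (by ring)
  have hΔ : ∀ i, x' i - x i = (1 - ρ) * (v i - x i) := fun i => by
    simp only [x', Pi.add_apply, Pi.smul_apply, smul_eq_mul]
    ring
  have hlin : (1 - ρ) * (θ * F y - 2 * F x) ≤ ∑ i, gradF x i * (x' i - x i) := by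
    have hyv : ∑ i, gradF x i * (y i - x i) ≤ ∑ i, gradF x i * (v i - x i) := by
      simp only [mul_sub, Finset.sum_sub_distrib]
      linarith
    calc (1 - ρ) * (θ * F y - 2 * F x)
        ≤ (1 - ρ) * ∑ i, gradF x i * (v i - x i) := mul_le_mul_of_nonneg_left
          ((hDR.mul_sub_two_mul_le_sum_gradF hFnonneg hgrad hx hy hθ0 hθ1 hxθ).trans hyv)
          (sub_nonneg.2 hρ1)
      _ = ∑ i, gradF x i * (x' i - x i) := by
        rw [Finset.mul_sum]
        exact Finset.sum_congr rfl fun i _ => by rw [hΔ]; ring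
  have hsq : ∑ i, (x' i - x i) ^ 2 ≤ (1 - ρ) ^ 2 * n := by
    simp only [hΔ, mul_pow, ← Finset.mul_sum]
    exact mul_le_mul_of_nonneg_left (sum_sq_sub_le_card hx hv) (sq_nonneg _)
  have hsm := (abs_le.1 (hsmooth x hx x' hx')).1
  linarith [mul_le_mul_of_nonneg_left hsq (by positivity : (0 : ℝ) ≤ L / 2)]

lemma fw_potential_step {σ τ Fx Fy Fs c : ℝ} (hσ : 0 < σ) (hστ : σ ≤ τ) (hFx : σ * Fx ≤ Fs)
    (h : Fx + (1 - σ / τ) * (1 / σ * Fs - 2 * Fx) - c * (1 - σ / τ) ^ 2 ≤ Fy) :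
    σ ^ 2 * Fx + (τ - σ) * Fs - c * (τ - σ) ^ 2 ≤ τ ^ 2 * Fy := by
  have hτ : 0 < τ := hσ.trans_le hστ
  have hslack : 0 ≤ (τ - σ) ^ 2 * (Fs / σ - Fx) :=
    mul_nonneg (sq_nonneg _) (sub_nonneg.2 ((le_div_iff₀' hσ).2 hFx))
  have hexpand : τ ^ 2 * (Fx + (1 - σ / τ) * (1 / σ * Fs - 2 * Fx) - c * (1 - σ / τ) ^ 2) =
      σ ^ 2 * Fx + (τ - σ) * Fs - c * (τ - σ) ^ 2 + (τ - σ) ^ 2 * (Fs / σ - Fx) := by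
    field_simp
    ring
  linarith [mul_le_mul_of_nonneg_left h (sq_nonneg τ)]

end FrankWolfeStep

section Schedule

lemma harmonicNum_succ (j : ℕ) : harmonicNum (j + 1) = harmonicNum j + 1 / (j + 1) := by
  rw [harmonicNum, Finset.sum_range_succ]
  rfl

lemma harmonicNum2_succ (j : ℕ) :
    harmonicNum2 (j + 1) = harmonicNum2 j + 1 / ((j : ℝ) + 1) ^ 2 := by
  rw [harmonicNum2, Finset.sum_range_succ]
  rfl

lemma harmonicNum_nonneg (j : ℕ) : 0 ≤ harmonicNum j :=
  Finset.sum_nonneg fun _ _ => by positivity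

lemma harmonicNum2_nonneg (j : ℕ) : 0 ≤ harmonicNum2 j :=
  Finset.sum_nonneg fun _ _ => by positivity

lemma harmonicNum_mono : Monotone harmonicNum := fun _ _ h =>
  Finset.sum_le_sum_of_subset_of_nonneg (Finset.range_subset_range.2 h) fun _ _ _ => by positivity

lemma one_le_harmonicNum {T : ℕ} (hT : 1 ≤ T) : 1 ≤ harmonicNum T := by
  simpa [harmonicNum] using harmonicNum_mono hT

lemma one_div_one_add_fwTime (T j : ℕ) :
    1 / (1 + fwTime T j) = 1 - Real.log (1 + harmonicNum j / harmonicNum T) := by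
  rw [fwTime, add_sub_cancel, one_div_one_div]

variable {T j : ℕ}

lemma log_one_add_div_harmonicNum_lt_one (hT : 1 ≤ T) (hj : j ≤ T) :
    Real.log (1 + harmonicNum j / harmonicNum T) < 1 := by
  have hHT : 0 < harmonicNum T := one_pos.trans_le (one_le_harmonicNum hT)
  have hr : harmonicNum j / harmonicNum T ≤ 1 := (div_le_one hHT).2 (harmonicNum_mono hj)
  have hr0 : 0 ≤ harmonicNum j / harmonicNum T := div_nonneg (harmonicNum_nonneg j) hHT.le
  calc Real.log (1 + harmonicNum j / harmonicNum T) ≤ Real.log 2 :=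
        Real.log_le_log (by linarith) (by linarith)
    _ < 1 := Real.log_two_lt_d9.trans (by norm_num)

lemma fwSqa_eq_exp (hT : 1 ≤ T) (hj : j ≤ T) :
    fwSqa T j = Real.exp (1 - 1 / (1 + fwTime T j)) := by
  have hpos : 0 < 1 / (1 + fwTime T j) := by
    rw [one_div_one_add_fwTime T j]
    linarith [log_one_add_div_harmonicNum_lt_one hT hj]
  have hne : 1 + fwTime T j ≠ 0 := fun h => by simp [h] at hpos
  rw [fwSqa]
  congr 1
  field_simp
  ring

lemma fwSqa_eq (hT : 1 ≤ T) (hj : j ≤ T) :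
    fwSqa T j = 1 + harmonicNum j / harmonicNum T := by
  have hHT : 0 < harmonicNum T := one_pos.trans_le (one_le_harmonicNum hT)
  rw [fwSqa_eq_exp hT hj, one_div_one_add_fwTime T j, sub_sub_cancel,
    Real.exp_log (by positivity [harmonicNum_nonneg j])]

lemma fwRatio_eq_div (hT : 1 ≤ T) (hj : j < T) :
    fwRatio T j = fwSqa T j / fwSqa T (j + 1) := by
  rw [fwRatio, fwSqa_eq_exp hT hj.le, fwSqa_eq_exp hT hj, ← Real.exp_sub]
  congr 1
  ring

lemma fwSqa_zero (hT : 1 ≤ T) : fwSqa T 0 = 1 := by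
  simp [fwSqa_eq hT (Nat.zero_le T), harmonicNum]

lemma fwSqa_self (hT : 1 ≤ T) : fwSqa T T = 2 := by
  have hHT : harmonicNum T ≠ 0 := (one_pos.trans_le (one_le_harmonicNum hT)).ne'
  rw [fwSqa_eq hT le_rfl, div_self hHT]
  norm_num

lemma fwSqa_succ (hT : 1 ≤ T) (hj : j < T) :
    fwSqa T (j + 1) = fwSqa T j + 1 / ((j + 1) * harmonicNum T) := by
  rw [fwSqa_eq hT hj, fwSqa_eq hT hj.le, harmonicNum_succ, add_div, div_div]
  ring

lemma one_le_fwSqa (hT : 1 ≤ T) (hj : j ≤ T) : 1 ≤ fwSqa T j := by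
  have hHT : 0 < harmonicNum T := one_pos.trans_le (one_le_harmonicNum hT)
  rw [fwSqa_eq hT hj]
  linarith [div_nonneg (harmonicNum_nonneg j) hHT.le]

lemma fwSqa_le_two (hT : 1 ≤ T) (hj : j ≤ T) : fwSqa T j ≤ 2 := by
  have hHT : 0 < harmonicNum T := one_pos.trans_le (one_le_harmonicNum hT)
  rw [fwSqa_eq hT hj]
  linarith [(div_le_one hHT).2 (harmonicNum_mono hj)]

lemma fwSqa_le_succ (hT : 1 ≤ T) (hj : j < T) : fwSqa T j ≤ fwSqa T (j + 1) := by
  rw [fwSqa_succ hT hj]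
  have := one_le_harmonicNum hT
  linarith [show 0 ≤ 1 / ((j + 1 : ℝ) * harmonicNum T) by positivity]

end Schedule

section FrankWolfe

variable {n T : ℕ} {x v : ℕ → Fin n → ℝ}

lemma fw_iterate_mem_box_and_le (hT : 1 ≤ T) (hx0 : x 0 = 0)
    (hv : ∀ j < T, v j ∈ Icc (0 : Fin n → ℝ) 1)
    (hstep : ∀ j < T, x (j + 1) = fwRatio T j • x j + (1 - fwRatio T j) • v j) :
    ∀ j ≤ T, x j ∈ Icc (0 : Fin n → ℝ) 1 ∧ ∀ i, x j i ≤ 1 - 1 / fwSqa T j := by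
  intro j
  induction j with
  | zero =>
    intro _
    rw [hx0, fwSqa_zero hT]
    exact ⟨⟨le_rfl, zero_le_one⟩, fun i => by simp⟩
  | succ j ih =>
    intro hj
    replace hj : j < T := hj
    obtain ⟨hxj, hxj_le⟩ := ih hj.le
    have hσ := one_le_fwSqa hT hj.le
    have hστ := fwSqa_le_succ hT hj
    set σ := fwSqa T j
    set τ := fwSqa T (j + 1)
    have hρ : fwRatio T j = σ / τ := fwRatio_eq_div hT hj
    have hρ0 : 0 ≤ σ / τ := div_nonneg (by linarith) (by linarith)
    have hρ1 : σ / τ ≤ 1 := div_le_one_of_le₀ hστ (by linarith)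
    rw [hstep j hj, hρ]
    refine ⟨convex_Icc (0 : Fin n → ℝ) 1 hxj (hv j hj) hρ0 (sub_nonneg.2 hρ1) (by ring),
      fun i => ?_⟩
    have hvi := (mem_box_iff.1 (hv j hj) i).2
    have hcomb : σ / τ * (1 - 1 / σ) + (1 - σ / τ) * 1 = 1 - 1 / τ := by
      field_simp
      ring
    simp only [Pi.add_apply, Pi.smul_apply, smul_eq_mul]
    linarith [mul_le_mul_of_nonneg_left (hxj_le i) hρ0,
      mul_le_mul_of_nonneg_left hvi (sub_nonneg.2 hρ1)]

lemma fw_potential_le {F : (Fin n → ℝ) → ℝ} {gradF : (Fin n → ℝ) → Fin n → ℝ} {L : ℝ}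
    (hL : 0 ≤ L) (hFnonneg : ∀ z ∈ Icc (0 : Fin n → ℝ) 1, 0 ≤ F z) (hDR : DRSubmodular F)
    (hgrad : HasGradientOnBox F gradF)
    (hsmooth : ∀ z ∈ Icc (0 : Fin n → ℝ) 1, ∀ w ∈ Icc (0 : Fin n → ℝ) 1,
      |F w - F z - ∑ i, gradF z i * (w i - z i)| ≤ L / 2 * ∑ i, (w i - z i) ^ 2)
    {y : Fin n → ℝ} (hy : y ∈ Icc (0 : Fin n → ℝ) 1) (hT : 1 ≤ T) (hx0 : x 0 = 0)
    (hv : ∀ j < T, v j ∈ Icc (0 : Fin n → ℝ) 1)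
    (hvmax : ∀ j < T, ∑ i, gradF (x j) i * y i ≤ ∑ i, gradF (x j) i * v j i)
    (hstep : ∀ j < T, x (j + 1) = fwRatio T j • x j + (1 - fwRatio T j) • v j)
    (hsmall : ∀ j < T, 2 * F (x j) ≤ F y) :
    ∀ j ≤ T, (fwSqa T j - 1) * F y - n * L / 2 * (harmonicNum2 j / harmonicNum T ^ 2) ≤
      fwSqa T j ^ 2 * F (x j) := by
  have hiter := fw_iterate_mem_box_and_le hT hx0 hv hstep
  intro j
  induction j with
  | zero =>
    intro _
    simp [fwSqa_zero hT, harmonicNum2, hFnonneg _ (hiter 0 (Nat.zero_le T)).1]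
  | succ j ih =>
    intro hj
    replace hj : j < T := hj
    obtain ⟨hxj, hxj_le⟩ := hiter j hj.le
    have hσ1 := one_le_fwSqa hT hj.le
    have hσ2 := fwSqa_le_two hT hj.le
    have hστ := fwSqa_le_succ hT hj
    have hd := fwSqa_succ hT hj
    set σ := fwSqa T j
    set τ := fwSqa T (j + 1)
    have hρ : fwRatio T j = σ / τ := fwRatio_eq_div hT hj
    have hstepF := hDR.le_apply_fw_step hFnonneg hgrad hL hsmooth hxj (hv j hj) hy
      (one_div_nonneg.2 (by linarith)) (div_le_one_of_le₀ hσ1 (by linarith)) hxj_le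
      (div_nonneg (by linarith) (by linarith))
      (div_le_one_of_le₀ hστ (by linarith)) (hvmax j hj)
    rw [← hρ, ← hstep j hj, hρ] at hstepF
    have hFx : σ * F (x j) ≤ F y := by nlinarith [hFnonneg _ hxj, hsmall j hj]
    have hpot := fw_potential_step (by linarith) hστ hFx hstepF
    have hHT : harmonicNum T ≠ 0 := (one_pos.trans_le (one_le_harmonicNum hT)).ne'
    have hH2 : harmonicNum2 (j + 1) / harmonicNum T ^ 2 =
        harmonicNum2 j / harmonicNum T ^ 2 + (τ - σ) ^ 2 := by
      rw [hd, harmonicNum2_succ]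
      field_simp
      ring
    rw [hH2]
    linarith [ih hj.le]

end FrankWolfe

theorem fw_best_iterate_bound_general
    (n : ℕ) (F : (Fin n → ℝ) → ℝ) (gradF : (Fin n → ℝ) → Fin n → ℝ)
    (L : ℝ) (hL : 0 ≤ L)
    (hFnonneg : ∀ z ∈ Set.Icc (0 : Fin n → ℝ) 1, 0 ≤ F z)
    (hDR : DRSubmodular F)
    (hgrad : HasGradientOnBox F gradF)
    (hsmooth : ∀ z ∈ Set.Icc (0 : Fin n → ℝ) 1, ∀ w ∈ Set.Icc (0 : Fin n → ℝ) 1,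
      |F w - F z - ∑ i, gradF z i * (w i - z i)| ≤ L / 2 * ∑ i, (w i - z i) ^ 2)
    (P : Set (Fin n → ℝ)) (hPsub : P ⊆ Set.Icc 0 1)
    (xstar : Fin n → ℝ) (hxstarP : xstar ∈ P)
    (T : ℕ) (hT : 1 ≤ T)
    (x v : ℕ → Fin n → ℝ)
    (hx0 : x 0 = 0)
    (hvP : ∀ j < T, v j ∈ P)
    (hvmax : ∀ j < T, ∀ w ∈ P, ∑ i, gradF (x j) i * w i ≤ ∑ i, gradF (x j) i * v j i)
    (hstep : ∀ j < T, x (j + 1) = fwRatio T j • x j + (1 - fwRatio T j) • v j) :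
    ∃ j ≤ T, F (x j) ≥
      1 / 4 * F xstar - (n : ℝ) * L / 8 * (harmonicNum2 T / harmonicNum T ^ 2) := by
  have hFstar : 0 ≤ F xstar := hFnonneg _ (hPsub hxstarP)
  have herr : 0 ≤ (n : ℝ) * L / 8 * (harmonicNum2 T / harmonicNum T ^ 2) := by
    have := harmonicNum2_nonneg T
    positivity
  by_contra! hlow
  have hpot := fw_potential_le hL hFnonneg hDR hgrad hsmooth (hPsub hxstarP) hT hx0
    (fun j hj => hPsub (hvP j hj)) (fun j hj => hvmax j hj xstar hxstarP) hstep
    (fun j hj => by linarith [hlow j hj.le]) T le_rfl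
  rw [fwSqa_self hT] at hpot
  linarith [hlow T le_rfl]

/-- Theorem 1 of the paper, explicit form. After `T` iterations the best
Frank–Wolfe iterate satisfies
`max_{0 ≤ j ≤ T} F(x(t_j)) ≥ (1/4) F(x*) - (nL/8) H_{2,T} / H_T²`. -/
theorem fw_best_iterate_bound
    (n : ℕ) (F : (Fin n → ℝ) → ℝ) (gradF : (Fin n → ℝ) → Fin n → ℝ)
    (L : ℝ) (hL : 0 ≤ L)
    (hFnonneg : ∀ z ∈ Set.Icc (0 : Fin n → ℝ) 1, 0 ≤ F z)
    (hDR : DRSubmodular F)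
    (hgrad : HasGradientOnBox F gradF)
    (hsmooth : ∀ z ∈ Set.Icc (0 : Fin n → ℝ) 1, ∀ w ∈ Set.Icc (0 : Fin n → ℝ) 1,
      |F w - F z - ∑ i, gradF z i * (w i - z i)| ≤ L / 2 * ∑ i, (w i - z i) ^ 2)
    (P : Set (Fin n → ℝ)) (hPsub : P ⊆ Set.Icc 0 1) (hPconv : Convex ℝ P)
    (h0P : (0 : Fin n → ℝ) ∈ P)
    (xstar : Fin n → ℝ) (hxstarP : xstar ∈ P) (hxstarMax : ∀ z ∈ P, F z ≤ F xstar)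
    (T : ℕ) (hT : 1 ≤ T)
    (x v : ℕ → Fin n → ℝ)
    (hx0 : x 0 = 0)
    (hvP : ∀ j < T, v j ∈ P)
    (hvmax : ∀ j < T, ∀ w ∈ P, ∑ i, gradF (x j) i * w i ≤ ∑ i, gradF (x j) i * v j i)
    (hstep : ∀ j < T, x (j + 1) = fwRatio T j • x j + (1 - fwRatio T j) • v j)
    (hF0 : F 0 = 0) :
    ∃ j ≤ T, F (x j) ≥
      1 / 4 * F xstar - (n : ℝ) * L / 8 * (harmonicNum2 T / harmonicNum T ^ 2) :=
  fw_best_iterate_bound_general n F gradF L hL hFnonneg hDR hgrad hsmooth P hPsub xstar hxstarP T hT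
    x v hx0 hvP hvmax hstep
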